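/- For θ ∈ (0, π/4] and c ∈ (0,1), the largest modulus ρ(θ,c) among the roots of the quadratic ρ² - (c·cos 2θ + 1)ρ + c·cos²θ = 0 equals √c·cos θ if c ≥ 1/(cos θ + sin θ)², and equals (1/2)(c·cos 2θ + 1 + √(c²cos²2θ - 2c + 1)) if c ≤ 1/(cos θ + sin θ)²; moreover ρ(θ,c) is monotonically decreasing in θ on [0, π/4]. -/

import Mathlib

open Real

/-- The asymptotic rate `ρ(θ,c)` of regularized Douglas–Rachford. -/
noncomputable def rateDR (θ c : ℝ) : ℝ :=
  if 1 / (Real.cos θ + Real.sin θ) ^ 2 ≤ c then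
    Real.sqrt c * Real.cos θ
  else
    (c * Real.cos (2 * θ) + 1 + Real.sqrt (c ^ 2 * Real.cos (2 * θ) ^ 2 - 2 * c + 1)) / 2

/-! The roots of `z² - b z + p` are `(b ± s)/2` for any square root `s` of `b² - 4p`. For real
`b ≥ 0` and `p`, a non-positive discriminant gives two conjugate roots, both of modulus `√p`;
a non-negative one gives two real roots, the larger being `(b + √(b² - 4p))/2`. In either case
the largest modulus is `max √p ((b + √(b² - 4p))/2)`, and `ρ(θ,c)` is this maximum for
`b = c cos 2θ + 1`, `p = c cos² θ`: the two cases of its definition are exactly the signs of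
`b² - 4p = (1 - c (1 + sin 2θ)) (1 - c + c sin 2θ)`. Both terms of the maximum decrease
in `θ`. -/

section Quadratic

variable {K : Type*} [NormedField K] [NeZero (2 : K)]

def quadraticRootNorms (b p : K) : Set ℝ :=
  {r : ℝ | ∃ z : K, z ^ 2 - b * z + p = 0 ∧ r = ‖z‖}

theorem monic_quadratic_eq_zero_iff {b p s : K} (hs : s * s = b ^ 2 - 4 * p) (z : K) :
    z ^ 2 - b * z + p = 0 ↔ z = (b + s) / 2 ∨ z = (b - s) / 2 := by
  have hdiscrim : discrim 1 (-b) p = s * s := by rw [discrim, hs]; ring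
  convert quadratic_eq_zero_iff one_ne_zero hdiscrim z using 2 <;> ring_nf

theorem isGreatest_norm_roots_monic_quadratic {b p s : K} (hs : s * s = b ^ 2 - 4 * p)
    (hle : ‖(b - s) / 2‖ ≤ ‖(b + s) / 2‖) :
    IsGreatest (quadraticRootNorms b p) ‖(b + s) / 2‖ := by
  have hset : quadraticRootNorms b p = {‖(b + s) / 2‖, ‖(b - s) / 2‖} := by
    ext r
    simp only [quadraticRootNorms, monic_quadratic_eq_zero_iff hs, Set.mem_ofPred_eq,
      Set.mem_insert_iff, Set.mem_singleton_iff]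
    constructor
    · rintro ⟨z, rfl | rfl, rfl⟩ <;> simp
    · rintro (rfl | rfl) <;> exact ⟨_, by simp, rfl⟩
  have hpair := isGreatest_pair (a := ‖(b + s) / 2‖) (b := ‖(b - s) / 2‖)
  rwa [max_eq_left hle, ← hset] at hpair

end Quadratic

section RealQuadratic

variable (b p : ℝ)

theorem add_sqrt_discrim_div_two_le_sqrt (hd : b ^ 2 - 4 * p ≤ 0) :
    (b + √(b ^ 2 - 4 * p)) / 2 ≤ √p := by
  rw [Real.sqrt_eq_zero'.mpr hd, add_zero]
  calc b / 2 ≤ |b| / 2 := by gcongr; exact le_abs_self b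
    _ = √(b ^ 2 / 4) := by rw [Real.sqrt_div' _ (by norm_num), Real.sqrt_sq_eq_abs]; norm_num
    _ ≤ √p := Real.sqrt_le_sqrt (by linarith)

theorem sqrt_le_add_sqrt_discrim_div_two (hb : 0 ≤ b) (hd : 0 ≤ b ^ 2 - 4 * p) :
    √p ≤ (b + √(b ^ 2 - 4 * p)) / 2 :=
  calc √p ≤ √((b / 2) ^ 2) := Real.sqrt_le_sqrt (by linarith)
    _ = b / 2 := Real.sqrt_sq (by positivity)
    _ ≤ (b + √(b ^ 2 - 4 * p)) / 2 := by gcongr; exact le_add_of_nonneg_right (sqrt_nonneg _)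

theorem isGreatest_norm_roots_of_discrim_nonpos (hd : b ^ 2 - 4 * p ≤ 0) :
    IsGreatest (quadraticRootNorms (b : ℂ) p) √p := by
  set s : ℂ := (√(-(b ^ 2 - 4 * p)) : ℝ) * Complex.I
  have hs : s * s = (b : ℂ) ^ 2 - 4 * p := by
    have hsq : ((√(-(b ^ 2 - 4 * p)) : ℝ) : ℂ) ^ 2 = -((b : ℂ) ^ 2 - 4 * p) := by
      exact_mod_cast Real.sq_sqrt (neg_nonneg.mpr hd)
    linear_combination (-1 : ℂ) * hsq + ((√(-(b ^ 2 - 4 * p)) : ℝ) : ℂ) ^ 2 * Complex.I_sq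
  have hnorm (ε : ℝ) (hε : ε ^ 2 = 1) : ‖((b : ℂ) + ε * s) / 2‖ = √p := by
    rw [norm_div, ← mul_assoc, ← Complex.ofReal_mul, Complex.norm_add_mul_I, mul_pow, hε,
      one_mul, Real.sq_sqrt (neg_nonneg.mpr hd), Complex.norm_two,
      show b ^ 2 + -(b ^ 2 - 4 * p) = 2 ^ 2 * p by ring,
      Real.sqrt_mul' _ (by linarith [sq_nonneg b]), Real.sqrt_sq zero_le_two]
    ring
  have hplus := hnorm 1 (one_pow 2)
  have hminus := hnorm (-1) (by norm_num)
  push_cast at hplus hminus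
  rw [one_mul] at hplus
  rw [neg_one_mul, ← sub_eq_add_neg] at hminus
  exact hplus ▸ isGreatest_norm_roots_monic_quadratic hs (hminus.trans hplus.symm).le

theorem isGreatest_norm_roots_of_discrim_nonneg (hb : 0 ≤ b) (hd : 0 ≤ b ^ 2 - 4 * p) :
    IsGreatest (quadraticRootNorms (b : ℂ) p) ((b + √(b ^ 2 - 4 * p)) / 2) := by
  set s : ℝ := √(b ^ 2 - 4 * p)
  have hs0 : 0 ≤ s := sqrt_nonneg _
  have hs : (s : ℂ) * s = (b : ℂ) ^ 2 - 4 * p := by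
    exact_mod_cast Real.mul_self_sqrt hd
  have hnorm (x : ℝ) : ‖((x : ℂ)) / 2‖ = |x| / 2 := by simp
  have hgreatest := isGreatest_norm_roots_monic_quadratic hs (by
    rw [← Complex.ofReal_add, ← Complex.ofReal_sub, hnorm, hnorm]
    refine div_le_div_of_nonneg_right ?_ zero_le_two
    rw [abs_of_nonneg (by positivity : 0 ≤ b + s)]
    exact abs_le.mpr ⟨by linarith, by linarith⟩)
  rwa [← Complex.ofReal_add, hnorm, abs_of_nonneg (by positivity)] at hgreatest

theorem isGreatest_norm_roots_real_quadratic (hb : 0 ≤ b) :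
    IsGreatest (quadraticRootNorms (b : ℂ) p) (max √p ((b + √(b ^ 2 - 4 * p)) / 2)) := by
  rcases le_total (b ^ 2 - 4 * p) 0 with hd | hd
  · rw [max_eq_left (add_sqrt_discrim_div_two_le_sqrt b p hd)]
    exact isGreatest_norm_roots_of_discrim_nonpos b p hd
  · rw [max_eq_right (sqrt_le_add_sqrt_discrim_div_two b p hb hd)]
    exact isGreatest_norm_roots_of_discrim_nonneg b p hb hd

end RealQuadratic

section RateDR

theorem discrim_rateDR (t c : ℝ) :
    (c * cos (2 * t) + 1) ^ 2 - 4 * (c * cos t ^ 2) = c ^ 2 * cos (2 * t) ^ 2 - 2 * c + 1 := by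
  rw [cos_two_mul]; ring

theorem cos_add_sin_sq (t : ℝ) : (cos t + sin t) ^ 2 = 1 + sin (2 * t) := by
  rw [sin_two_mul]; linear_combination sin_sq_add_cos_sq t

theorem one_div_cos_add_sin_sq_le_iff {t c : ℝ} (ht : t ∈ Set.Icc 0 (π / 2)) (hc0 : 0 ≤ c)
    (hc1 : c < 1) :
    1 / (cos t + sin t) ^ 2 ≤ c ↔ c ^ 2 * cos (2 * t) ^ 2 - 2 * c + 1 ≤ 0 := by
  have hsin : 0 ≤ sin (2 * t) := sin_nonneg_of_nonneg_of_le_pi (by linarith [ht.1])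
    (by linarith [ht.2])
  have hfactor : c ^ 2 * cos (2 * t) ^ 2 - 2 * c + 1 =
      (1 - c * (1 + sin (2 * t))) * (1 - c + c * sin (2 * t)) := by
    linear_combination c ^ 2 * cos_sq_add_sin_sq (2 * t)
  have hpos : 0 < 1 - c + c * sin (2 * t) := by nlinarith
  rw [cos_add_sin_sq, div_le_iff₀ (by linarith), hfactor]
  constructor
  · intro h; nlinarith
  · intro h; nlinarith [nonpos_of_mul_nonpos_left h hpos]

theorem cos_two_mul_nonneg_of_mem_Icc {t : ℝ} (ht : t ∈ Set.Icc 0 (π / 4)) :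
    0 ≤ cos (2 * t) :=
  cos_nonneg_of_mem_Icc ⟨by linarith [ht.1, pi_pos], by linarith [ht.2]⟩

theorem rateDR_eq_max {t c : ℝ} (ht : t ∈ Set.Icc 0 (π / 4)) (hc0 : 0 < c) (hc1 : c < 1) :
    rateDR t c = max (√c * cos t)
      ((c * cos (2 * t) + 1 + √(c ^ 2 * cos (2 * t) ^ 2 - 2 * c + 1)) / 2) := by
  have hcos : 0 ≤ cos t :=
    cos_nonneg_of_mem_Icc ⟨by linarith [ht.1, pi_pos], by linarith [ht.2, pi_pos]⟩
  have hcos2 := cos_two_mul_nonneg_of_mem_Icc ht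
  have hsqrt : √c * cos t = √(c * cos t ^ 2) := by
    rw [Real.sqrt_mul hc0.le, Real.sqrt_sq hcos]
  rw [rateDR, hsqrt, ← discrim_rateDR]
  split_ifs with hd <;>
    rw [one_div_cos_add_sin_sq_le_iff ⟨ht.1, by linarith [ht.2, pi_pos]⟩ hc0.le hc1,
      ← discrim_rateDR] at hd
  · exact (max_eq_left (add_sqrt_discrim_div_two_le_sqrt _ _ hd)).symm
  · exact (max_eq_right (sqrt_le_add_sqrt_discrim_div_two _ _ (by positivity) (by linarith))).symm

theorem antitoneOn_rateDR {c : ℝ} (hc0 : 0 < c) (hc1 : c < 1) :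
    AntitoneOn (fun t => rateDR t c) (Set.Icc 0 (π / 4)) := by
  have hcos_two_mul : AntitoneOn (fun t => cos (2 * t)) (Set.Icc 0 (π / 4)) := by
    intro s hs t ht hst
    exact antitoneOn_cos ⟨by linarith [hs.1], by linarith [hs.2, pi_pos]⟩
      ⟨by linarith [ht.1], by linarith [ht.2, pi_pos]⟩ (by linarith)
  have hmax : AntitoneOn (fun t => max (√c * cos t)
      ((c * cos (2 * t) + 1 + √(c ^ 2 * cos (2 * t) ^ 2 - 2 * c + 1)) / 2))
      (Set.Icc 0 (π / 4)) := by
    refine AntitoneOn.max ?_ ?_ <;> intro s hs t ht hst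
    · exact mul_le_mul_of_nonneg_left (antitoneOn_cos ⟨hs.1, by linarith [hs.2, pi_pos]⟩
        ⟨ht.1, by linarith [ht.2, pi_pos]⟩ hst) (sqrt_nonneg c)
    · have hcos2 := cos_two_mul_nonneg_of_mem_Icc ht
      have hle := hcos_two_mul hs ht hst
      dsimp only
      gcongr
  exact hmax.congr fun t ht => (rateDR_eq_max ht hc0 hc1).symm

end RateDR

/-- For `θ ∈ (0, π/4]` and `c ∈ (0,1)`, `ρ(θ,c)` is the largest modulus among the
(complex) roots of `ρ² - (c·cos 2θ + 1)ρ + c·cos²θ = 0`, and `ρ(·,c)` is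
monotonically decreasing on `[0, π/4]`. -/
theorem stmt16 (θ c : ℝ) (hθ : θ ∈ Set.Ioc 0 (π / 4)) (hc : c ∈ Set.Ioo (0:ℝ) 1) :
    IsGreatest {r : ℝ | ∃ z : ℂ,
        z ^ 2 - (↑(c * Real.cos (2 * θ) + 1)) * z + (↑(c * Real.cos θ ^ 2)) = 0 ∧
        r = ‖z‖}
      (rateDR θ c) ∧
    AntitoneOn (fun t => rateDR t c) (Set.Icc 0 (π / 4)) := by
  obtain ⟨hc0, hc1⟩ := hc
  have hθ' : θ ∈ Set.Icc 0 (π / 4) := Set.Ioc_subset_Icc_self hθ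
  have hcos : 0 ≤ cos θ :=
    cos_nonneg_of_mem_Icc ⟨by linarith [hθ'.1, pi_pos], by linarith [hθ'.2, pi_pos]⟩
  have hb : 0 ≤ c * cos (2 * θ) + 1 := by
    have hcos2 := cos_two_mul_nonneg_of_mem_Icc hθ'
    positivity
  have hgreatest := isGreatest_norm_roots_real_quadratic _ (c * cos θ ^ 2) hb
  rw [discrim_rateDR, Real.sqrt_mul hc0.le, Real.sqrt_sq hcos, ← rateDR_eq_max hθ' hc0 hc1]
    at hgreatest
  exact ⟨hgreatest, antitoneOn_rateDR hc0 hc1⟩
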